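/- arXiv:1903.03052 — 6 statements merged into one kernel-verified Lean document; each statement's English description precedes it below -/
import Mathlib

section
/- Let H be a connected finite simple graph and f : 𝒦_H → ℕ a function such that every edge of H belongs to some complete subgraph K of H with f(K) ≥ 1. Then the bipartization B_f(H) is a connected graph. -/
/-- `K` is the vertex set of a (nonempty) complete subgraph (clique) of `H`. -/
def IsCliqueF {V : Type*} (H : SimpleGraph V) (K : Finset V) : Prop :=
  K.Nonempty ∧ ∀ x ∈ K, ∀ y ∈ K, x ≠ y → H.Adj x y

instance {V : Type*} [DecidableEq V] (H : SimpleGraph V) [DecidableRel H.Adj] :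
    DecidablePred (IsCliqueF H) := fun K => by
  unfold IsCliqueF; infer_instance

/-- The family `𝒦_H` of all complete subgraphs (cliques) of `H`. -/
abbrev CliqueSet {V : Type*} (H : SimpleGraph V) := {K : Finset V // IsCliqueF H K}

/-- The vertex type of the bipartization `B_f(H)`: the partite set `A` is `V_H`
(the `Sum.inl` part) and the partite set `B` is `⋃_K 𝓕_K`, where
`𝓕_K = {(K,1),…,(K,f K)}` is encoded as `Σ K, Fin (f K)` (the `Sum.inr` part). -/
abbrev BVert {V : Type*} (H : SimpleGraph V) (f : Finset V → ℕ) :=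
  V ⊕ (Σ K : CliqueSet H, Fin (f K.1))

/-- The bipartization `B_f(H)` of `H` with respect to `f`: a vertex `x ∈ A` is
adjacent to `(K, i) ∈ B` iff `x` is a vertex of `K`. -/
def Bip {V : Type*} (H : SimpleGraph V) (f : Finset V → ℕ) : SimpleGraph (BVert H f) where
  Adj a b :=
    (∃ (x : V) (p : Σ K : CliqueSet H, Fin (f K.1)),
        a = Sum.inl x ∧ b = Sum.inr p ∧ x ∈ p.1.1) ∨
    (∃ (x : V) (p : Σ K : CliqueSet H, Fin (f K.1)),
        b = Sum.inl x ∧ a = Sum.inr p ∧ x ∈ p.1.1)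
  symm := by
    constructor
    rintro a b (⟨x, p, rfl, rfl, hx⟩ | ⟨x, p, rfl, rfl, hx⟩)
    · exact Or.inr ⟨x, p, rfl, rfl, hx⟩
    · exact Or.inl ⟨x, p, rfl, rfl, hx⟩
  loopless := by
    constructor
    rintro a (⟨x, p, h1, h2, _⟩ | ⟨x, p, h1, h2, _⟩) <;> subst h1 <;> simp at h2

/-- `D` is a dominating set of `G`. -/
def IsDomSet {W : Type*} (G : SimpleGraph W) (D : Set W) : Prop :=
  ∀ v ∉ D, ∃ u ∈ D, G.Adj u v

/-- The domination number `γ(G)`. -/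
noncomputable def domNum {W : Type*} (G : SimpleGraph W) : ℕ :=
  sInf {n | ∃ D : Set W, IsDomSet G D ∧ D.ncard = n}

/-- `C` is a covering (vertex cover) set of `G`. -/
def IsCoverSet {W : Type*} (G : SimpleGraph W) (C : Set W) : Prop :=
  ∀ u v, G.Adj u v → u ∈ C ∨ v ∈ C

/-- The covering number `β(G)`. -/
noncomputable def coverNum {W : Type*} (G : SimpleGraph W) : ℕ :=
  sInf {n | ∃ C : Set W, IsCoverSet G C ∧ C.ncard = n}

/-- A leaf is a vertex of degree one. -/
def IsLeaf {W : Type*} (G : SimpleGraph W) (v : W) : Prop := (G.neighborSet v).ncard = 1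

/-- A support vertex is a vertex adjacent to a leaf. -/
def IsSupport {W : Type*} (G : SimpleGraph W) (v : W) : Prop := ∃ u, G.Adj v u ∧ IsLeaf G u

/-- A weak support is a vertex adjacent to exactly one leaf. -/
def IsWeakSupport {W : Type*} (G : SimpleGraph W) (v : W) : Prop :=
  {u | G.Adj v u ∧ IsLeaf G u}.ncard = 1

/-- `S` induces a block of `G`: a maximal connected subgraph without a cutvertex. -/
def IsBlock {W : Type*} (G : SimpleGraph W) (S : Set W) : Prop :=
  S.Nonempty ∧ (G.induce S).Connected ∧
    (∀ v ∈ S, S = {v} ∨ (G.induce (S \ {v})).Connected) ∧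
    ∀ T : Set W, S ⊆ T → (G.induce T).Connected →
      (∀ v ∈ T, T = {v} ∨ (G.induce (T \ {v})).Connected) → S = T

/-!
Two adjacent vertices of `H` lie in a clique `K` with `f K ≥ 1`, so they are joined in `B_f(H)`
through `(K, 1)`; along paths of `H` all of `A = V_H` is therefore mutually reachable. Every
`(K, i) ∈ B` is adjacent to a vertex of the nonempty clique `K`, so it joins that component.
-/

theorem SimpleGraph.connected_of_forall_reachable_range {V W : Type*} [Nonempty V]
    {G : SimpleGraph W} (g : V → W) (hg : ∀ x y, G.Reachable (g x) (g y))
    (hcover : ∀ w, ∃ x, G.Reachable (g x) w) : G.Connected := by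
  rw [SimpleGraph.connected_iff]
  refine ⟨fun a b => ?_, ⟨g (Classical.arbitrary V)⟩⟩
  obtain ⟨x, hx⟩ := hcover a
  obtain ⟨y, hy⟩ := hcover b
  exact hx.symm.trans ((hg x y).trans hy)

namespace Bip

variable {V : Type*} {H : SimpleGraph V} {f : Finset V → ℕ}

theorem adj_inl_inr {x : V} {p : Σ K : CliqueSet H, Fin (f K.1)} (hx : x ∈ p.1.1) :
    (Bip H f).Adj (Sum.inl x) (Sum.inr p) :=
  Or.inl ⟨x, p, rfl, rfl, hx⟩

theorem exists_adj_inr (p : Σ K : CliqueSet H, Fin (f K.1)) :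
    ∃ x, (Bip H f).Adj (Sum.inl x) (Sum.inr p) :=
  let ⟨x, hx⟩ := p.1.2.1
  ⟨x, adj_inl_inr hx⟩

theorem reachable_inl_of_mem_clique {K : Finset V} (hK : IsCliqueF H K) (hf : 1 ≤ f K)
    {x y : V} (hx : x ∈ K) (hy : y ∈ K) :
    (Bip H f).Reachable (Sum.inl x) (Sum.inl y) :=
  let p : Σ K : CliqueSet H, Fin (f K.1) := ⟨⟨K, hK⟩, ⟨0, hf⟩⟩
  (adj_inl_inr (p := p) hx).reachable.trans (adj_inl_inr (p := p) hy).reachable.symm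

theorem reachable_inl_of_reachable
    (hedge : ∀ u v : V, H.Adj u v → ∃ K : Finset V, IsCliqueF H K ∧ u ∈ K ∧ v ∈ K ∧ 1 ≤ f K)
    {x y : V} (h : H.Reachable x y) : (Bip H f).Reachable (Sum.inl x) (Sum.inl y) := by
  rw [SimpleGraph.reachable_iff_reflTransGen] at h ⊢
  refine h.lift' Sum.inl fun u v huv => ?_
  obtain ⟨K, hK, hu, hv, hf⟩ := hedge u v huv
  exact (SimpleGraph.reachable_iff_reflTransGen _ _).1 (reachable_inl_of_mem_clique hK hf hu hv)

end Bip

theorem bip_connected_general {V : Type*} (H : SimpleGraph V) (f : Finset V → ℕ)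
    (hconn : H.Connected)
    (hedge : ∀ u v : V, H.Adj u v → ∃ K : Finset V, IsCliqueF H K ∧ u ∈ K ∧ v ∈ K ∧ 1 ≤ f K) :
    (Bip H f).Connected := by
  have := hconn.nonempty
  refine SimpleGraph.connected_of_forall_reachable_range Sum.inl
    (fun x y => Bip.reachable_inl_of_reachable hedge (hconn x y)) ?_
  rintro (x | p)
  · exact ⟨x, .rfl⟩
  · obtain ⟨x, hx⟩ := Bip.exists_adj_inr p
    exact ⟨x, hx.reachable⟩

theorem bip_connected {V : Type*} [Fintype V] (H : SimpleGraph V) (f : Finset V → ℕ)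
    (hconn : H.Connected)
    (hedge : ∀ u v : V, H.Adj u v → ∃ K : Finset V, IsCliqueF H K ∧ u ∈ K ∧ v ∈ K ∧ 1 ≤ f K) :
    (Bip H f).Connected :=
  bip_connected_general H f hconn hedge
end

section
/- For every finite bipartite graph G = ((A,B),E_G) there exist a finite simple graph H and a function f : 𝒦_H → ℕ such that G is isomorphic to the bipartization B_f(H) of H with respect to f. -/
/- The neighbourhood of a non-isolated vertex on the `B`-side is a nonempty set of `A`-side
vertices, hence a clique of the complete graph on the `A`-side; taking `f K` to be the number of
`B`-vertices with neighbourhood `K` recovers `G`. Isolated `B`-vertices have no such clique, so they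
are moved to the `A`-side, where they stay isolated. -/

section incidenceGraph

variable {V V' β β' : Type*}

def incidenceGraph (r : V → β → Prop) : SimpleGraph (V ⊕ β) where
  Adj
    | .inl x, .inr b => r x b
    | .inr b, .inl x => r x b
    | _, _ => False
  symm := by
    constructor
    rintro (x | b) (y | c) h <;> exact h
  loopless := by
    constructor
    rintro (x | b) h <;> exact h

@[simp]
theorem incidenceGraph_adj_inl_inr (r : V → β → Prop) (x : V) (b : β) :
    (incidenceGraph r).Adj (.inl x) (.inr b) ↔ r x b := Iff.rfl

@[simp]
theorem incidenceGraph_adj_inr_inl (r : V → β → Prop) (x : V) (b : β) :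
    (incidenceGraph r).Adj (.inr b) (.inl x) ↔ r x b := Iff.rfl

@[simp]
theorem incidenceGraph_not_adj_inl_inl (r : V → β → Prop) (x y : V) :
    ¬(incidenceGraph r).Adj (.inl x) (.inl y) := id

@[simp]
theorem incidenceGraph_not_adj_inr_inr (r : V → β → Prop) (b c : β) :
    ¬(incidenceGraph r).Adj (.inr b) (.inr c) := id

def incidenceGraphCongr {r : V → β → Prop} {r' : V' → β' → Prop} (e₁ : V ≃ V') (e₂ : β ≃ β')
    (h : ∀ x b, r' (e₁ x) (e₂ b) ↔ r x b) : incidenceGraph r ≃g incidenceGraph r' where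
  toEquiv := e₁.sumCongr e₂
  map_rel_iff' := by
    rintro (x | b) (y | c) <;> simp [h]

def incidenceGraphSubtypeIso {W : Type*} (G : SimpleGraph W) (p : W → Prop) [DecidablePred p]
    (hside : ∀ u v, G.Adj u v → (p u ↔ ¬p v)) :
    incidenceGraph (fun (x : {w // p w}) (b : {w // ¬p w}) => G.Adj x b) ≃g G where
  toEquiv := Equiv.sumCompl p
  map_rel_iff' := by
    rintro (⟨x, hx⟩ | ⟨b, hb⟩) (⟨y, hy⟩ | ⟨c, hc⟩)
    · simpa using fun h => (hside x y h).1 hx hy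
    · simp
    · simpa using G.adj_comm b y
    · simpa using fun h => hb ((hside b c h).2 hc)

end incidenceGraph

theorem bip_eq_incidenceGraph {V : Type*} (H : SimpleGraph V) (f : Finset V → ℕ) :
    Bip H f = incidenceGraph (fun x (p : Σ K : CliqueSet H, Fin (f K.1)) => x ∈ p.1.1) := by
  ext (x | p) (y | q) <;> simp only [Bip, incidenceGraph, Sum.inl.injEq, Sum.inr.injEq,
    reduceCtorEq, false_and, and_false, exists_false, or_false, false_or, exists_eq_left',
    exists_and_left]

theorem isCliqueF_top_iff {V : Type*} (K : Finset V) : IsCliqueF ⊤ K ↔ K.Nonempty := by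
  simp [IsCliqueF]

section cliqueMultiplicity

variable {V β : Type*} {H : SimpleGraph V}

noncomputable def cliqueMultiplicity (N : β → CliqueSet H) (K : Finset V) : ℕ :=
  Nat.card {b // (N b).1 = K}

noncomputable def cliqueFiberEquiv [Finite β] (N : β → CliqueSet H) :
    β ≃ Σ K : CliqueSet H, Fin (cliqueMultiplicity N K.1) :=
  (Equiv.sigmaFiberEquiv N).symm.trans <| Equiv.sigmaCongrRight fun _ =>
    (Equiv.subtypeEquivRight fun _ => Subtype.ext_iff).trans (Finite.equivFin _)

noncomputable def incidenceGraphIsoBip [Finite β] (N : β → CliqueSet H) :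
    incidenceGraph (fun x b => x ∈ (N b).1) ≃g Bip H (cliqueMultiplicity N) := by
  rw [bip_eq_incidenceGraph]
  exact incidenceGraphCongr (Equiv.refl V) (cliqueFiberEquiv N) fun _ _ => Iff.rfl

end cliqueMultiplicity

theorem bipartite_is_bipartization_general (W : Type) [Fintype W] (G : SimpleGraph W) (A B : Set W)
    (hdisj : Disjoint A B)
    (hbip : ∀ u v : W, G.Adj u v → (u ∈ A ∧ v ∈ B) ∨ (u ∈ B ∧ v ∈ A)) :
    ∃ (U : Type) (_ : Fintype U) (H : SimpleGraph U) (f : Finset U → ℕ),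
      Nonempty (G ≃g Bip H f) := by
  classical
  let p : W → Prop := fun w => ¬(w ∈ B ∧ ∃ x, G.Adj w x)
  have hside : ∀ u v, G.Adj u v → (p u ↔ ¬p v) := by
    intro u v huv
    rcases hbip u v huv with ⟨hu, hv⟩ | ⟨hu, hv⟩
    · simpa [p, hv, Set.disjoint_left.mp hdisj hu] using ⟨u, huv.symm⟩
    · simpa [p, hu, Set.disjoint_left.mp hdisj hv] using ⟨v, huv⟩
  let N (b : {w // ¬p w}) : CliqueSet (⊤ : SimpleGraph {w // p w}) :=
    ⟨({x | G.Adj x.1 b.1} : Finset _), (isCliqueF_top_iff _).2 <| by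
      obtain ⟨x, hbx⟩ := (not_not.1 b.2).2
      exact ⟨⟨x, not_not.1 ((hside b x hbx).not.1 b.2)⟩, by simpa using hbx.symm⟩⟩
  have hN : (fun x b => x ∈ (N b).1) = fun x b => G.Adj x.1 b.1 := by
    ext x b
    simp [N]
  refine ⟨{w // p w}, Fintype.ofFinite _, ⊤, cliqueMultiplicity N, ⟨?_⟩⟩
  exact (incidenceGraphSubtypeIso G p hside).symm.trans (hN ▸ incidenceGraphIsoBip N)

theorem bipartite_is_bipartization (W : Type) [Fintype W] (G : SimpleGraph W) (A B : Set W)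
    (hdisj : Disjoint A B) (hcover : A ∪ B = Set.univ)
    (hbip : ∀ u v : W, G.Adj u v → (u ∈ A ∧ v ∈ B) ∨ (u ∈ B ∧ v ∈ A)) :
    ∃ (U : Type) (_ : Fintype U) (H : SimpleGraph U) (f : Finset U → ℕ),
      Nonempty (G ≃g Bip H f) :=
  bipartite_is_bipartization_general W G A B hdisj hbip
end

section
/- Let H be a connected finite simple graph and f : 𝒦_H → ℕ a function. If there exist two vertices u and v of H and two distinct internally vertex-disjoint positively f-valued complete u–v paths in H, then the bipartization B_f(H) contains a cycle. -/
/-- A positively `f`-valued complete `u`–`v` path in `H`: an alternating sequence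
`(v₀, F₁, v₁, …, v_{k-1}, F_k, v_k)` of (distinct) vertices and (distinct) complete
subgraphs of `H` with `v₀ = u`, `v_k = v`, such that `v_{i-1}v_i` is an edge of the
complete subgraph `F_i` and `f(F_i) ≥ 1` for every `i = 1, …, k`. -/
structure CliquePath {V : Type*} (H : SimpleGraph V) (f : Finset V → ℕ) (u v : V) where
  k : ℕ
  verts : Fin (k + 1) → V
  cliques : Fin k → Finset V
  first : verts 0 = u
  last : verts (Fin.last k) = v
  verts_inj : Function.Injective verts
  cliques_inj : Function.Injective cliques
  isClique : ∀ i : Fin k, IsCliqueF H (cliques i)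
  pos : ∀ i : Fin k, 1 ≤ f (cliques i)
  mem_left : ∀ i : Fin k, verts i.castSucc ∈ cliques i
  mem_right : ∀ i : Fin k, verts i.succ ∈ cliques i

/-!
A clique path `(v₀, F₁, v₁, …, F_k, v_k)` traces the path `v₀, (F₁,1), v₁, …, (F_k,1), v_k` in
`B_f(H)`, and this trace determines the clique path. Two distinct clique paths from `u` to `v`
therefore give two distinct `u`–`v` paths in `B_f(H)`, which is impossible in a forest.
-/

namespace Fin

variable {α : Type*} {k : ℕ}

/-- The sequence `a 0, b 0, a 1, b 1, …, b (k-1), a k`. -/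
def alternate (a : Fin (k + 1) → α) (b : Fin k → α) : Fin (2 * k + 1) → α := fun j =>
  if h : j.val % 2 = 0 then a ⟨j / 2, by omega⟩ else b ⟨j / 2, by omega⟩

variable {a a' : Fin (k + 1) → α} {b b' : Fin k → α}

@[simp]
theorem alternate_two_mul (i : Fin (k + 1)) :
    alternate a b ⟨2 * i, by omega⟩ = a i := by
  simp [alternate]

@[simp]
theorem alternate_two_mul_add_one (i : Fin k) :
    alternate a b ⟨2 * i + 1, by omega⟩ = b i := by
  have h : (2 * i.val + 1) / 2 = i := by omega
  simp [alternate, h]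

theorem alternate_zero : alternate a b ⟨0, by omega⟩ = a 0 := by
  simp [alternate]

theorem alternate_last : alternate a b (Fin.last (2 * k)) = a (Fin.last k) :=
  alternate_two_mul (Fin.last k)

theorem alternate_injective (ha : a.Injective) (hb : b.Injective) (hab : ∀ i j, a i ≠ b j) :
    (alternate a b).Injective := by
  intro j j' h
  unfold alternate at h
  split_ifs at h with hj hj'
  · have := Fin.mk.inj_iff.mp (ha h); ext; omega
  · exact absurd h (hab _ _)
  · exact absurd h.symm (hab _ _)
  · have := Fin.mk.inj_iff.mp (hb h); ext; omega

theorem alternate_inj : alternate a b = alternate a' b' ↔ a = a' ∧ b = b' := by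
  refine ⟨fun h => ⟨funext fun i => ?_, funext fun i => ?_⟩, fun ⟨ha, hb⟩ => ha ▸ hb ▸ rfl⟩
  · simpa using congrFun h ⟨2 * i, by omega⟩
  · simpa using congrFun h ⟨2 * i + 1, by omega⟩

theorem isChain_ofFn_alternate {r : α → α → Prop} (hl : ∀ i, r (a i.castSucc) (b i))
    (hr : ∀ i, r (b i) (a i.succ)) : (List.ofFn (alternate a b)).IsChain r := by
  refine List.isChain_ofFn.mpr fun j hj => ?_
  obtain ⟨i, rfl | rfl⟩ := Nat.even_or_odd' j
  · have := hl ⟨i, by omega⟩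
    rwa [← alternate_two_mul (a := a) (b := b),
      ← alternate_two_mul_add_one (a := a) (b := b)] at this
  · have := hr ⟨i, by omega⟩
    rw [← alternate_two_mul (a := a) (b := b),
      ← alternate_two_mul_add_one (a := a) (b := b)] at this
    convert this using 3
    simp only [Fin.val_succ]; omega

end Fin

section Bipartization

open SimpleGraph

variable {V : Type*} {H : SimpleGraph V} {f : Finset V → ℕ}

theorem bip_adj_inl_inr {x : V} {P : Σ K : CliqueSet H, Fin (f K.1)} (hx : x ∈ P.1.1) :
    (Bip H f).Adj (Sum.inl x) (Sum.inr P) :=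
  Or.inl ⟨x, P, rfl, rfl, hx⟩

namespace CliquePath

variable {u v : V} (p : CliquePath H f u v)

/-- The vertex `(F_i, 1)` of `B_f(H)` contributed by the `i`-th clique of `p`. -/
def cliqueVert (i : Fin p.k) : BVert H f :=
  Sum.inr ⟨⟨p.cliques i, p.isClique i⟩, ⟨0, p.pos i⟩⟩

theorem cliqueVert_injective : p.cliqueVert.Injective := fun _ _ h =>
  p.cliques_inj (congrArg (fun P => P.1.1) (Sum.inr_injective h))

def bipSupport : List (BVert H f) :=
  List.ofFn (Fin.alternate (Sum.inl ∘ p.verts) p.cliqueVert)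

theorem bipSupport_nodup : p.bipSupport.Nodup :=
  List.nodup_ofFn.mpr <| Fin.alternate_injective (Sum.inl_injective.comp p.verts_inj)
    p.cliqueVert_injective fun _ _ => Sum.inl_ne_inr

theorem isChain_bipSupport : p.bipSupport.IsChain (Bip H f).Adj :=
  Fin.isChain_ofFn_alternate (fun i => bip_adj_inl_inr (p.mem_left i))
    (fun i => (bip_adj_inl_inr (p.mem_right i)).symm)

theorem bipSupport_ne_nil : p.bipSupport ≠ [] := by simp [bipSupport]

theorem head_bipSupport : p.bipSupport.head p.bipSupport_ne_nil = Sum.inl u :=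
  (List.head_ofFn _).trans (Fin.alternate_zero.trans (congrArg Sum.inl p.first))

theorem getLast_bipSupport : p.bipSupport.getLast p.bipSupport_ne_nil = Sum.inl v :=
  (List.getLast_ofFn _).trans (Fin.alternate_last.trans (congrArg Sum.inl p.last))

def toBipWalk : (Bip H f).Walk (Sum.inl u) (Sum.inl v) :=
  (Walk.ofSupport p.bipSupport p.bipSupport_ne_nil p.isChain_bipSupport).copy
    p.head_bipSupport p.getLast_bipSupport

@[simp]
theorem support_toBipWalk : p.toBipWalk.support = p.bipSupport := by
  rw [toBipWalk, Walk.support_copy, Walk.support_ofSupport]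

theorem toBipWalk_isPath : p.toBipWalk.IsPath :=
  Walk.IsPath.mk' (p.support_toBipWalk ▸ p.bipSupport_nodup)

theorem bipSupport_injective :
    Function.Injective (bipSupport : CliquePath H f u v → List (BVert H f)) := by
  rintro ⟨k, vs, cs, _, _, _, _, _, _, _, _⟩ ⟨k', vs', cs', _, _, _, _, _, _, _, _⟩ h
  obtain ⟨hk, hseq⟩ := Sigma.mk.inj_iff.mp (List.ofFn_inj'.mp h)
  obtain rfl : k = k' := by simp only at hk; omega
  obtain ⟨hvs, hcs⟩ := Fin.alternate_inj.mp (eq_of_heq hseq)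
  obtain rfl : vs = vs' := funext fun i => Sum.inl_injective (congrFun hvs i)
  obtain rfl : cs = cs' :=
    funext fun i => congrArg (fun P => P.1.1) (Sum.inr_injective (congrFun hcs i))
  rfl

theorem toBipWalk_injective :
    Function.Injective (toBipWalk : CliquePath H f u v → (Bip H f).Walk _ _) := fun p q h =>
  bipSupport_injective (by simpa using congrArg Walk.support h)

end CliquePath

end Bipartization

theorem bip_contains_cycle_of_two_paths_general {V : Type*}
    (H : SimpleGraph V) (f : Finset V → ℕ) (u v : V)
    (p q : CliquePath H f u v) (hpq : p ≠ q) :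
    ¬ (Bip H f).IsAcyclic := fun hacyclic =>
  hpq <| CliquePath.toBipWalk_injective <| congrArg Subtype.val <|
    (hacyclic.subsingleton_path _ _).elim ⟨_, p.toBipWalk_isPath⟩ ⟨_, q.toBipWalk_isPath⟩

theorem bip_contains_cycle_of_two_paths {V : Type*} [Fintype V]
    (H : SimpleGraph V) (f : Finset V → ℕ) (hconn : H.Connected) (u v : V)
    (p q : CliquePath H f u v) (hpq : p ≠ q)
    (hdisj : ∀ (i : Fin (p.k + 1)) (j : Fin (q.k + 1)),
      p.verts i = q.verts j → p.verts i = u ∨ p.verts i = v) :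
    ¬ (Bip H f).IsAcyclic :=
  bip_contains_cycle_of_two_paths_general H f u v p q hpq
end

section
/- Let H be a connected finite simple graph and f : 𝒦_H → ℕ a function such that every edge of H belongs to some complete subgraph K of H with f(K) ≥ 1. Then the bipartization B_f(H) is a tree if and only if all of the following hold: (1) f(K) ≤ 1 for every non-trivial complete subgraph K of H; (2) H is a block graph; (3) for every non-trivial complete subgraph K of H, f(K) = 1 if and only if K is a block of H. -/
/-
A walk in `H` lifts to `B_f(H)` by routing each edge through a copy of a clique covering it,
and the vertices of `H` on a cycle of `B_f(H)` form a nonseparable set. If `B_f(H)` is a tree,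
two vertices of `H` have at most one common neighbour in it: this gives `f(K) ≤ 1` and makes the
copy whose clique contains a given clique unique. Were `x, y` non-adjacent in a nonseparable set,
the vertex after `x` and the first copy on the tree path from `x` to `y` would separate them in
`H`; so blocks are complete, and a clique is a block exactly when it is the clique of a copy.
Conversely, under (1)–(3) two consecutive copies on a cycle of `B_f(H)` would both be the unique
copy of the block containing the vertices of `H` on that cycle.
-/

open SimpleGraph Sum

section Nonseparable

variable {W : Type*} {G : SimpleGraph W} {S T : Set W}

def IsNonseparable (G : SimpleGraph W) (S : Set W) : Prop :=
  S.Nonempty ∧ (G.induce S).Connected ∧ ∀ v ∈ S, S = {v} ∨ (G.induce (S \ {v})).Connected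

lemma preconnected_induce_of_subsingleton (hS : S.Subsingleton) : (G.induce S).Preconnected :=
  have := hS.coe_sort
  Preconnected.of_subsingleton

lemma IsNonseparable.of_preconnected (hne : S.Nonempty) (hS : (G.induce S).Preconnected)
    (hdel : ∀ v ∈ S, (G.induce (S \ {v})).Preconnected) : IsNonseparable G S := by
  refine ⟨hne, @Connected.mk _ _ hS hne.to_subtype, fun v hv => ?_⟩
  by_cases hrest : (S \ {v}).Nonempty
  · exact Or.inr (@Connected.mk _ _ (hdel v hv) hrest.to_subtype)
  · rw [Set.not_nonempty_iff_eq_empty, Set.sdiff_eq_empty] at hrest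
    exact Or.inl (hrest.antisymm (Set.singleton_subset_iff.mpr hv))

lemma SimpleGraph.IsClique.preconnected_induce (hS : G.IsClique S) : (G.induce S).Preconnected := by
  rw [induce_eq_top.mpr hS]
  exact preconnected_top

lemma SimpleGraph.IsClique.isNonseparable (hS : G.IsClique S) (hne : S.Nonempty) :
    IsNonseparable G S :=
  .of_preconnected hne hS.preconnected_induce fun _ _ =>
    (hS.subset Set.sdiff_subset).preconnected_induce

lemma SimpleGraph.IsClique.isNonseparable_union {x y : W} (hS : G.IsClique S) (hT : G.IsClique T)
    (hxS : x ∈ S) (hxT : x ∈ T) (hyS : y ∈ S) (hyT : y ∈ T) (hxy : x ≠ y) :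
    IsNonseparable G (S ∪ T) := by
  refine ⟨⟨x, Or.inl hxS⟩, induce_union_connected hS.preconnected_induce hT.preconnected_induce
    ⟨x, hxS, hxT⟩, fun v _ => Or.inr ?_⟩
  obtain ⟨z, hzS, hzT, hzv⟩ : ∃ z ∈ S, z ∈ T ∧ z ≠ v := by
    by_cases hxv : x = v
    · exact ⟨y, hyS, hyT, hxv ▸ hxy.symm⟩
    · exact ⟨x, hxS, hxT, hxv⟩
  rw [Set.union_sdiff_distrib]
  exact induce_union_connected (hS.subset Set.sdiff_subset).preconnected_induce
    (hT.subset Set.sdiff_subset).preconnected_induce ⟨z, ⟨hzS, hzv⟩, hzT, hzv⟩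

lemma IsNonseparable.isBlock (hS : IsNonseparable G S)
    (hmax : ∀ T, S ⊆ T → IsNonseparable G T → T ⊆ S) : IsBlock G S :=
  ⟨hS.1, hS.2.1, hS.2.2, fun T hST hT hTdel =>
    hST.antisymm (hmax T hST ⟨hS.1.mono hST, hT, hTdel⟩)⟩

lemma IsBlock.isNonseparable (hS : IsBlock G S) : IsNonseparable G S :=
  ⟨hS.1, hS.2.1, hS.2.2.1⟩

lemma IsBlock.eq_of_subset (hS : IsBlock G S) (hST : S ⊆ T) (hT : IsNonseparable G T) : S = T :=
  hS.2.2.2 T hST hT.2.1 hT.2.2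

lemma IsBlock.eq_of_isClique {x y : W} (hS : IsBlock G S) (hT : IsBlock G T)
    (hSc : G.IsClique S) (hTc : G.IsClique T)
    (hxS : x ∈ S) (hxT : x ∈ T) (hyS : y ∈ S) (hyT : y ∈ T) (hxy : x ≠ y) : S = T := by
  have hU := hSc.isNonseparable_union hTc hxS hxT hyS hyT hxy
  exact (hS.eq_of_subset Set.subset_union_left hU).trans
    (hT.eq_of_subset Set.subset_union_right hU).symm

lemma IsNonseparable.exists_isBlock_superset [Finite W] (hS : IsNonseparable G S) :
    ∃ B, IsBlock G B ∧ S ⊆ B := by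
  obtain ⟨B, hSB, hB⟩ := Finite.exists_le_maximal hS
  exact ⟨B, hB.prop.isBlock fun T hBT hT => (hB.eq_of_ge hT hBT).subset, hSB⟩

end Nonseparable

namespace SimpleGraph

variable {W : Type*} {G : SimpleGraph W}

lemma IsAcyclic.commonNeighbors_subsingleton (hG : G.IsAcyclic) {a b : W} (hab : a ≠ b) :
    (G.commonNeighbors a b).Subsingleton := by
  intro c hc d hd
  rw [mem_commonNeighbors] at hc hd
  let P (m : W) (ham : G.Adj a m) (hbm : G.Adj b m) : G.Path a b :=
    ⟨.cons ham (.cons hbm.symm .nil), by simp [ham.ne, hbm.ne', hab]⟩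
  have := hG.subsingleton_path a b
  simpa [P] using congrArg (fun p : G.Path a b => p.1.support)
    (Subsingleton.elim (P c hc.1 hc.2) (P d hd.1 hd.2))

lemma Walk.IsCycle.exists_walk_support_diff {u v : W} {c : G.Walk u u} (hc : c.IsCycle)
    (hv : v ∈ c.support) :
    ∃ (a b : W) (p : G.Walk a b), ∀ x, x ∈ p.support ↔ x ∈ c.support ∧ x ≠ v := by
  classical
  set d := c.rotate v hv
  have hd : d.IsCycle := hc.rotate hv
  have htail : ¬ d.tail.Nil := by
    rw [← Walk.length_eq_zero_iff, Walk.length_tail]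
    have := hd.three_le_length
    omega
  -- rotated to start at `v`, the cycle minus `v` is the tail of `d` without its last vertex
  have hsplit := Walk.support_dropLast_concat htail
  have hnd : (d.tail.dropLast.support ++ [v]).Nodup := hsplit ▸ hd.isPath_tail.support_nodup
  have hvnot : v ∉ d.tail.dropLast.support := fun h => by
    simp only [List.nodup_append, List.nodup_singleton, List.mem_singleton] at hnd
    exact hnd.2.2 v h v rfl rfl
  refine ⟨_, _, d.tail.dropLast, fun x => ?_⟩
  rw [← Walk.mem_support_rotate_iff c v hv, ← Walk.cons_support_tail hd.not_nil, ← hsplit]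
  constructor
  · intro hx
    exact ⟨by simp [hx], fun hxv => hvnot (hxv ▸ hx)⟩
  · rintro ⟨hx, hxv⟩
    simpa [hxv] using hx

end SimpleGraph

lemma IsCliqueF.isClique {V : Type*} {H : SimpleGraph V} {K : Finset V} (hK : IsCliqueF H K) :
    H.IsClique (K : Set V) :=
  fun x hx y hy hxy => hK.2 x hx y hy hxy

abbrev CliqueCopy {V : Type*} (H : SimpleGraph V) (f : Finset V → ℕ) :=
  Σ K : CliqueSet H, Fin (f K.1)

namespace Bip

variable {V : Type*} {H : SimpleGraph V} {f : Finset V → ℕ}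

def EdgesCovered (H : SimpleGraph V) (f : Finset V → ℕ) : Prop :=
  ∀ u v, H.Adj u v → ∃ p : CliqueCopy H f, u ∈ p.1.1 ∧ v ∈ p.1.1

@[simp] lemma adj_inl_inr_s10 {x : V} {p : CliqueCopy H f} :
    (Bip H f).Adj (inl x) (inr p) ↔ x ∈ p.1.1 := by
  constructor
  · rintro (⟨_, _, h, h', hx⟩ | ⟨_, _, h, -, -⟩)
    · cases h; cases h'; exact hx
    · cases h
  · exact fun hx => Or.inl ⟨x, p, rfl, rfl, hx⟩

@[simp] lemma adj_inr_inl {x : V} {p : CliqueCopy H f} :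
    (Bip H f).Adj (inr p) (inl x) ↔ x ∈ p.1.1 := by
  rw [adj_comm, adj_inl_inr_s10]

lemma exists_of_adj_inl {x : V} {b : BVert H f} (h : (Bip H f).Adj (inl x) b) :
    ∃ p : CliqueCopy H f, b = inr p ∧ x ∈ p.1.1 := by
  rcases b with y | p
  · simp [Bip] at h
  · exact ⟨p, rfl, adj_inl_inr_s10.mp h⟩

lemma exists_of_adj_inr {p : CliqueCopy H f} {b : BVert H f} (h : (Bip H f).Adj (inr p) b) :
    ∃ x : V, b = inl x ∧ x ∈ p.1.1 := by
  rcases b with x | q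
  · exact ⟨x, rfl, adj_inr_inl.mp h⟩
  · simp [Bip] at h

lemma copy_eq_of_fst_eq {p q : CliqueCopy H f} (h : p.1 = q.1) (hf : f p.1.1 ≤ 1) : p = q := by
  obtain ⟨K, i⟩ := p
  obtain ⟨K', j⟩ := q
  subst h
  have hi : (i : ℕ) < 1 := i.isLt.trans_le hf
  have hj : (j : ℕ) < 1 := j.isLt.trans_le hf
  congr
  ext
  omega

lemma exists_walk_of_walk (hcov : EdgesCovered H f) {x y : V} (w : H.Walk x y) :
    ∃ Ω : (Bip H f).Walk (inl x) (inl y), ∀ z, inl z ∈ Ω.support → z ∈ w.support := by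
  induction w with
  | nil => exact ⟨.nil, by simp⟩
  | @cons a b c hab w ih =>
    obtain ⟨Ω, hΩ⟩ := ih
    obtain ⟨p, hap, hbp⟩ := hcov a b hab
    refine ⟨.cons (adj_inl_inr_s10.mpr hap) (.cons (adj_inr_inl.mpr hbp) Ω), fun z hz => ?_⟩
    simp only [Walk.support_cons, List.mem_cons, inl.injEq, reduceCtorEq, false_or] at hz
    rcases hz with rfl | hz
    · simp
    · simp [hΩ z hz]

lemma connected (hconn : H.Connected) (hcov : EdgesCovered H f) : (Bip H f).Connected := by
  obtain ⟨x₀⟩ := hconn.nonempty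
  have hreach : ∀ x : V, (Bip H f).Reachable (inl x₀) (inl x) := fun x =>
    let ⟨w⟩ := hconn.preconnected x₀ x
    ⟨(exists_walk_of_walk hcov w).choose⟩
  refine (connected_iff_exists_forall_reachable _).mpr ⟨inl x₀, ?_⟩
  rintro (x | p)
  · exact hreach x
  · obtain ⟨x, hx⟩ := p.1.2.1
    exact (hreach x).trans (adj_inl_inr_s10.mpr hx).reachable

def aSupport {a b : BVert H f} (W : (Bip H f).Walk a b) : Set V := {x | inl x ∈ W.support}

lemma preconnected_induce_aSupport {a b : BVert H f} (W : (Bip H f).Walk a b) :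
    (H.induce (aSupport W)).Preconnected := by
  induction W with
  | nil =>
    refine preconnected_induce_of_subsingleton fun x hx y hy => ?_
    simp only [aSupport, Walk.support_nil, List.mem_singleton, Set.mem_ofPred_eq] at hx hy
    exact inl_injective (hx.trans hy.symm)
  | @cons u u' b h W ih =>
    rcases u with x | p
    · obtain ⟨p, rfl, hxp⟩ := exists_of_adj_inl h
      cases W with
      | nil =>
        have : aSupport (.cons h .nil) = {x} := by ext; simp [aSupport]
        rw [this]
        exact preconnected_induce_of_subsingleton Set.subsingleton_singleton
      | cons h' W =>
        obtain ⟨y, rfl, hyp⟩ := exists_of_adj_inr h'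
        have hy : y ∈ aSupport (.cons h' W) := by simp [aSupport]
        have hsplit : aSupport (.cons h (.cons h' W)) = {x} ∪ aSupport (.cons h' W) := by
          ext; simp [aSupport]
        rw [hsplit]
        by_cases hxy : x = y
        · rwa [hxy, Set.singleton_union, Set.insert_eq_of_mem hy]
        · exact (connected_induce_union
            (preconnected_induce_of_subsingleton Set.subsingleton_singleton) ih
            (Set.mem_singleton x) hy (p.1.2.2 x hxp y hyp hxy)).preconnected
    · have : aSupport (.cons h W) = aSupport W := by ext; simp [aSupport]
      rwa [this]

lemma isNonseparable_aSupport {u : BVert H f} {c : (Bip H f).Walk u u} (hc : c.IsCycle) :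
    IsNonseparable H (aSupport c) := by
  have hne : (aSupport c).Nonempty := by
    cases c with
    | nil => exact absurd hc Walk.not_isCycle_nil
    | @cons _ u' _ h c' =>
      rcases u with x | p
      · exact ⟨x, by simp [aSupport]⟩
      · obtain ⟨x, rfl, -⟩ := exists_of_adj_inr h
        exact ⟨x, by simp [aSupport]⟩
  refine .of_preconnected hne (preconnected_induce_aSupport c) fun v hv => ?_
  obtain ⟨a, b, W, hW⟩ := hc.exists_walk_support_diff hv
  have hdiff : aSupport c \ {v} = aSupport W := by
    ext x
    simp [aSupport, hW]
  exact hdiff ▸ preconnected_induce_aSupport W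

lemma isAcyclic [Finite V]
    (h1 : ∀ K : Finset V, IsCliqueF H K → 2 ≤ K.card → f K ≤ 1)
    (h2 : ∀ S : Set V, IsBlock H S → H.IsClique S)
    (h3 : ∀ K : Finset V, IsCliqueF H K → 2 ≤ K.card → (f K = 1 ↔ IsBlock H ↑K)) :
    (Bip H f).IsAcyclic := by
  classical
  have hblock : ∀ (p : CliqueCopy H f) {x y : V}, x ∈ p.1.1 → y ∈ p.1.1 → x ≠ y →
      f p.1.1 ≤ 1 ∧ IsBlock H ↑p.1.1 := by
    intro p x y hx hy hxy
    have hcard : 2 ≤ p.1.1.card := Finset.one_lt_card.mpr ⟨x, hx, y, hy, hxy⟩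
    have hf : f p.1.1 = 1 := le_antisymm (h1 _ p.1.2 hcard) p.2.pos
    exact ⟨hf.le, (h3 _ p.1.2 hcard).mp hf⟩
  intro u c hc
  obtain ⟨x₀, hx₀⟩ := (isNonseparable_aSupport hc).1
  have hd := hc.rotate hx₀
  generalize c.rotate _ hx₀ = d at hd
  obtain ⟨B, hB, hdB⟩ := (isNonseparable_aSupport hd).exists_isBlock_superset
  obtain _ | ⟨h₀, d⟩ := d
  · exact Walk.not_isCycle_nil hd
  obtain ⟨p₀, rfl, hx₀p₀⟩ := exists_of_adj_inl h₀
  obtain _ | ⟨h₁, d⟩ := d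
  obtain ⟨x₁, rfl, hx₁p₀⟩ := exists_of_adj_inr h₁
  obtain _ | ⟨h₂, d⟩ := d
  · exact absurd hd.three_le_length (by simp)
  obtain ⟨p₁, rfl, hx₁p₁⟩ := exists_of_adj_inl h₂
  obtain _ | ⟨h₃, d⟩ := d
  obtain ⟨x₂, rfl, hx₂p₁⟩ := exists_of_adj_inr h₃
  have hnd := hd.support_nodup
  simp only [Walk.support_cons, List.tail_cons, List.nodup_cons, List.mem_cons, reduceCtorEq,
    inr.injEq, false_or] at hnd
  have hx₁₀ : x₁ ≠ x₀ := fun h => hnd.2.1 (h ▸ d.end_mem_support)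
  have hx₁₂ : x₁ ≠ x₂ := fun h => hnd.2.1 (h ▸ d.start_mem_support)
  obtain ⟨hf₀, hB₀⟩ := hblock p₀ hx₀p₀ hx₁p₀ hx₁₀.symm
  obtain ⟨-, hB₁⟩ := hblock p₁ hx₁p₁ hx₂p₁ hx₁₂
  -- both copies are the block containing the vertices of the cycle
  have e₀ : (p₀.1.1 : Set V) = B := hB₀.eq_of_isClique hB (h2 _ hB₀) (h2 _ hB)
    hx₀p₀ (hdB (by simp [aSupport])) hx₁p₀ (hdB (by simp [aSupport])) hx₁₀.symm
  have e₁ : (p₁.1.1 : Set V) = B := hB₁.eq_of_isClique hB (h2 _ hB₁) (h2 _ hB)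
    hx₁p₁ (hdB (by simp [aSupport])) hx₂p₁ (hdB (by simp [aSupport])) hx₁₂
  exact hnd.1 (.inl <|
    copy_eq_of_fst_eq (Subtype.ext (Finset.coe_injective (e₀.trans e₁.symm))) hf₀)

lemma copy_eq_of_two_mem (hac : (Bip H f).IsAcyclic) {p q : CliqueCopy H f} {x y : V}
    (hxy : x ≠ y) (hxp : x ∈ p.1.1) (hyp : y ∈ p.1.1) (hxq : x ∈ q.1.1) (hyq : y ∈ q.1.1) :
    p = q :=
  inr_injective <| hac.commonNeighbors_subsingleton (inl_injective.ne hxy)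
    ((Bip H f).mem_commonNeighbors.mpr ⟨adj_inl_inr_s10.mpr hxp, adj_inl_inr_s10.mpr hyp⟩)
    ((Bip H f).mem_commonNeighbors.mpr ⟨adj_inl_inr_s10.mpr hxq, adj_inl_inr_s10.mpr hyq⟩)

lemma le_one_of_isAcyclic (hac : (Bip H f).IsAcyclic) {K : Finset V} (hK : IsCliqueF H K)
    (hcard : 2 ≤ K.card) : f K ≤ 1 := by
  obtain ⟨x, hx, y, hy, hxy⟩ := Finset.one_lt_card.mp hcard
  by_contra! hf
  have := copy_eq_of_two_mem hac hxy (p := ⟨⟨K, hK⟩, ⟨0, Nat.zero_lt_of_lt hf⟩⟩)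
    (q := ⟨⟨K, hK⟩, ⟨1, hf⟩⟩) hx hy hx hy
  simp at this

lemma copy_eq_of_triangle (hac : (Bip H f).IsAcyclic) {p p₁ p₂ : CliqueCopy H f} {x y z : V}
    (hxz : x ≠ z) (hzy : z ≠ y) (hxy : x ≠ y) (hx : x ∈ p.1.1) (hy : y ∈ p.1.1)
    (hx₁ : x ∈ p₁.1.1) (hz₁ : z ∈ p₁.1.1) (hz₂ : z ∈ p₂.1.1) (hy₂ : y ∈ p₂.1.1) : p₁ = p₂ := by
  by_contra hne
  let P₄ : (Bip H f).Path (inl x) (inl y) :=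
    ⟨.cons (adj_inl_inr_s10.mpr hx₁) (.cons (adj_inr_inl.mpr hz₁)
      (.cons (adj_inl_inr_s10.mpr hz₂) (.cons (adj_inr_inl.mpr hy₂) .nil))), by simp [*]⟩
  let P₂ : (Bip H f).Path (inl x) (inl y) :=
    ⟨.cons (adj_inl_inr_s10.mpr hx) (.cons (adj_inr_inl.mpr hy) .nil), by simp [hxy]⟩
  have := hac.subsingleton_path (inl x) (inl y)
  simpa [P₂, P₄] using
    congrArg (fun P : (Bip H f).Path _ _ => P.1.length) (Subsingleton.elim P₄ P₂)

lemma exists_copy_superset (hac : (Bip H f).IsAcyclic) (hcov : EdgesCovered H f) {T : Set V}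
    (hT : H.IsClique T) {x y : V} (hx : x ∈ T) (hy : y ∈ T) (hxy : x ≠ y) :
    ∃ p : CliqueCopy H f, T ⊆ p.1.1 := by
  obtain ⟨p, hxp, hyp⟩ := hcov x y (hT hx hy hxy)
  refine ⟨p, fun z hz => ?_⟩
  by_cases hzx : z = x
  · exact hzx ▸ hxp
  by_cases hzy : z = y
  · exact hzy ▸ hyp
  obtain ⟨p₁, hx₁, hz₁⟩ := hcov x z (hT hx hz (Ne.symm hzx))
  obtain ⟨p₂, hz₂, hy₂⟩ := hcov z y (hT hz hy hzy)
  obtain rfl := copy_eq_of_triangle hac (Ne.symm hzx) hzy hxy hxp hyp hx₁ hz₁ hz₂ hy₂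
  exact copy_eq_of_two_mem hac hxy hx₁ hy₂ hxp hyp ▸ hz₁

lemma mem_support_of_isPath (hac : (Bip H f).IsAcyclic) (hcov : EdgesCovered H f) {x y v : V}
    {P : (Bip H f).Walk (inl x) (inl y)} (hP : P.IsPath) (hv : inl v ∈ P.support)
    (w : H.Walk x y) : v ∈ w.support := by
  classical
  obtain ⟨Ω, hΩ⟩ := exists_walk_of_walk hcov w
  have := hac.subsingleton_path (inl x) (inl y)
  have hΩP : Ω.bypass = P := congrArg Subtype.val
    (Subsingleton.elim (⟨Ω.bypass, Ω.bypass_isPath⟩ : (Bip H f).Path _ _) ⟨P, hP⟩)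
  exact hΩ v (Ω.support_bypass_subset_support (hΩP ▸ hv))

lemma _root_.IsNonseparable.isClique (ht : (Bip H f).IsTree) (hcov : EdgesCovered H f)
    {T : Set V} (hT : IsNonseparable H T) : H.IsClique T := by
  intro x hx y hy hxy
  by_contra hnadj
  obtain ⟨P, hP⟩ := ht.connected.preconnected.exists_isPath (inl x) (inl y)
  obtain _ | ⟨h₁, P⟩ := P
  · exact hxy rfl
  obtain ⟨p, rfl, hxp⟩ := exists_of_adj_inl h₁
  obtain _ | ⟨h₂, P⟩ := P
  obtain ⟨v, rfl, hvp⟩ := exists_of_adj_inr h₂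
  have hvy : v ≠ y := fun hvy => hnadj (p.1.2.2 x hxp y (hvy ▸ hvp) hxy)
  have hvx : v ≠ x := by
    have := hP.support_nodup
    simp only [Walk.support_cons, List.nodup_cons, List.mem_cons, reduceCtorEq, false_or] at this
    exact fun h => this.1 (h ▸ P.start_mem_support)
  -- `v` separates `x` from `y`, but `T \ {v}` still connects them
  have hsep := mem_support_of_isPath ht.isAcyclic hcov hP (v := v) (by simp)
  have hTv : (H.induce (T \ {v})).Connected := by
    by_cases hvT : v ∈ T
    · exact (hT.2.2 v hvT).resolve_left fun h => hvx (Set.mem_singleton_iff.mp (h ▸ hx)).symm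
    · rw [Set.sdiff_singleton_eq_self hvT]
      exact hT.2.1
  obtain ⟨W⟩ := hTv.preconnected ⟨x, hx, hvx.symm⟩ ⟨y, hy, hvy.symm⟩
  have hW := Walk.support_map (Embedding.induce (T \ {v})).toHom W
  obtain ⟨u, -, hu⟩ := List.mem_map.mp (hW ▸ hsep _)
  exact u.2.2 hu

lemma isBlock_of_eq_one (ht : (Bip H f).IsTree) (hcov : EdgesCovered H f) {K : Finset V}
    (hK : IsCliqueF H K) (hcard : 2 ≤ K.card) (hf : f K = 1) : IsBlock H ↑K := by
  obtain ⟨x, hx, y, hy, hxy⟩ := Finset.one_lt_card.mp hcard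
  refine (hK.isClique.isNonseparable (Finset.coe_nonempty.mpr hK.1)).isBlock fun T hKT hT => ?_
  obtain ⟨p, hTp⟩ :=
    exists_copy_superset ht.isAcyclic hcov (hT.isClique ht hcov) (hKT hx) (hKT hy) hxy
  obtain rfl : p = ⟨⟨K, hK⟩, ⟨0, (hf ▸ Nat.one_pos : 0 < f K)⟩⟩ :=
    copy_eq_of_two_mem ht.isAcyclic hxy (hTp (hKT hx)) (hTp (hKT hy)) hx hy
  exact hTp

lemma eq_one_of_isBlock (hac : (Bip H f).IsAcyclic) (hcov : EdgesCovered H f) {K : Finset V}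
    (hK : IsCliqueF H K) (hcard : 2 ≤ K.card) (hB : IsBlock H ↑K) : f K = 1 := by
  obtain ⟨x, hx, y, hy, hxy⟩ := Finset.one_lt_card.mp hcard
  obtain ⟨p, hKp⟩ := exists_copy_superset hac hcov hK.isClique hx hy hxy
  have hKeq : K = p.1.1 := Finset.coe_injective
    (hB.eq_of_subset hKp (p.1.2.isClique.isNonseparable ⟨x, hKp hx⟩))
  exact le_antisymm (le_one_of_isAcyclic hac hK hcard) (hKeq ▸ p.2.pos)

end Bip

theorem bip_isTree_iff_general {V : Type*} [Fintype V]
    (H : SimpleGraph V) (f : Finset V → ℕ) (hconn : H.Connected)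
    (hedge : ∀ u v : V, H.Adj u v → ∃ K : Finset V, IsCliqueF H K ∧ u ∈ K ∧ v ∈ K ∧ 1 ≤ f K) :
    (Bip H f).IsTree ↔
      ((∀ K : Finset V, IsCliqueF H K → 2 ≤ K.card → f K ≤ 1) ∧
       (∀ S : Set V, IsBlock H S → ∀ x ∈ S, ∀ y ∈ S, x ≠ y → H.Adj x y) ∧
       (∀ K : Finset V, IsCliqueF H K → 2 ≤ K.card → (f K = 1 ↔ IsBlock H ↑K))) := by
  have hcov : Bip.EdgesCovered H f := fun u v huv =>
    let ⟨K, hK, hu, hv, hf⟩ := hedge u v huv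
    ⟨⟨⟨K, hK⟩, ⟨0, hf⟩⟩, hu, hv⟩
  constructor
  · intro ht
    refine ⟨fun K hK hcard => Bip.le_one_of_isAcyclic ht.isAcyclic hK hcard,
      fun S hS x hx y hy hxy => hS.isNonseparable.isClique ht hcov hx hy hxy,
      fun K hK hcard => ⟨Bip.isBlock_of_eq_one ht hcov hK hcard,
        Bip.eq_one_of_isBlock ht.isAcyclic hcov hK hcard⟩⟩
  · rintro ⟨h1, h2, h3⟩
    exact ⟨Bip.connected hconn hcov,
      Bip.isAcyclic h1 (fun S hS x hx y hy hxy => h2 S hS x hx y hy hxy) h3⟩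

theorem bip_isTree_iff {V : Type*} [Fintype V] [DecidableEq V]
    (H : SimpleGraph V) (f : Finset V → ℕ) (hconn : H.Connected)
    (hedge : ∀ u v : V, H.Adj u v → ∃ K : Finset V, IsCliqueF H K ∧ u ∈ K ∧ v ∈ K ∧ 1 ≤ f K) :
    (Bip H f).IsTree ↔
      ((∀ K : Finset V, IsCliqueF H K → 2 ≤ K.card → f K ≤ 1) ∧
       (∀ S : Set V, IsBlock H S → ∀ x ∈ S, ∀ y ∈ S, x ≠ y → H.Adj x y) ∧
       (∀ K : Finset V, IsCliqueF H K → 2 ≤ K.card → (f K = 1 ↔ IsBlock H ↑K))) :=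
  bip_isTree_iff_general H f hconn hedge
end

section
/- Let G = ((A,B),E_G) be a connected finite bipartite graph with 1 ≤ |A| ≤ |B|. Then the following are equivalent: (1) γ(G) = |A|; (2) γ(G) = β(G) = |A|; (3) G has both of the following properties: (a) every support vertex of G belonging to B is a weak support and each of its non-leaf neighbors is a support vertex; (b) whenever x and y are vertices of A that are neither leaves nor support vertices and d_G(x,y) = 2, there exist at least two vertices x̄ and ȳ in B with N_G(x̄) = N_G(ȳ) = {x,y}. -/
/-! Since `G` has no isolated vertex, the part `A` is a covering set and hence a dominating set,
so `γ(G) ≤ β(G) ≤ |A|`. If `γ(G) = |A|`, then for distinct `x, y ∈ A` with a common neighbour `w`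
the smaller set `(A \ {x, y}) ∪ {w}` does not dominate, so some vertex `b ≠ w` has all its
neighbours in `{x, y}`; suitable choices of `x`, `y`, `w` yield (a) and (b). Conversely, under (a)
and (b) every dominating set `D` admits an injection `A \ D → D \ A` sending `a` to a neighbour
in `D`: a leaf if `a` is a support vertex; if `a` has a partner `y ∉ D` with some vertex of
neighbourhood `{a, y}`, one of the (by (b), at least two) such vertices; otherwise any dominator.
-/

open SimpleGraph

section Basic

variable {W : Type*} {G : SimpleGraph W}

theorem domNum_le {D : Set W} (hD : IsDomSet G D) : domNum G ≤ D.ncard :=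
  Nat.sInf_le ⟨D, hD, rfl⟩

theorem coverNum_le {C : Set W} (hC : IsCoverSet G C) : coverNum G ≤ C.ncard :=
  Nat.sInf_le ⟨C, hC, rfl⟩

theorem le_domNum {k : ℕ} (h : ∀ D, IsDomSet G D → k ≤ D.ncard) : k ≤ domNum G :=
  le_csInf ⟨_, Set.univ, fun v hv => absurd (Set.mem_univ v) hv, rfl⟩
    (by rintro n ⟨D, hD, rfl⟩; exact h D hD)

theorem IsDomSet.mem_of_forall_adj_notMem {D : Set W} (hD : IsDomSet G D) {t : W}
    (ht : ∀ u, G.Adj t u → u ∉ D) : t ∈ D := by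
  by_contra htD
  obtain ⟨u, huD, hut⟩ := hD t htD
  exact ht u hut.symm huD

theorem IsCoverSet.isDomSet {C : Set W} (hC : IsCoverSet G C) (hnbr : ∀ v, ∃ u, G.Adj v u) :
    IsDomSet G C := fun v hv => by
  obtain ⟨u, hvu⟩ := hnbr v
  exact ⟨u, (hC v u hvu).resolve_left hv, hvu.symm⟩

theorem domNum_le_coverNum (hnbr : ∀ v, ∃ u, G.Adj v u) : domNum G ≤ coverNum G := by
  obtain ⟨C, hC, hcard⟩ : coverNum G ∈ {n | ∃ C : Set W, IsCoverSet G C ∧ C.ncard = n} :=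
    Nat.sInf_mem ⟨_, Set.univ, fun u _ _ => Or.inl trivial, rfl⟩
  exact hcard ▸ domNum_le (hC.isDomSet hnbr)

theorem IsLeaf.neighborSet_eq {l v : W} (hl : IsLeaf G l) (hvl : G.Adj v l) :
    G.neighborSet l = {v} := by
  obtain ⟨c, hc⟩ := Set.ncard_eq_one.mp hl
  have hv : v ∈ G.neighborSet l := hvl.symm
  rw [hc, Set.mem_singleton_iff] at hv
  rw [hc, hv]

theorem IsLeaf.eq_of_adj {v x y : W} (hv : IsLeaf G v) (hx : G.Adj v x) (hy : G.Adj v y) :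
    x = y := by
  have hx' : x ∈ G.neighborSet v := hx
  rw [hv.neighborSet_eq hy.symm] at hx'
  exact hx'

theorem isSupport_of_neighborSet_eq {b u : W} (hb : G.neighborSet b = {u}) : IsSupport G u :=
  ⟨b, G.adj_symm (hb.symm ▸ rfl : u ∈ G.neighborSet b), by rw [IsLeaf, hb, Set.ncard_singleton]⟩

theorem adj_of_neighborSet_eq_pair {b x y : W} (h : G.neighborSet b = {x, y}) :
    G.Adj b x ∧ G.Adj b y := by
  simp [← mem_neighborSet, h]

theorem SimpleGraph.dist_eq_two_iff {u v : W} :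
    G.dist u v = 2 ↔ u ≠ v ∧ ¬G.Adj u v ∧ (G.commonNeighbors u v).Nonempty := by
  rw [← edist_eq_two_iff, SimpleGraph.dist, ENat.toNat_eq_iff two_ne_zero]
  rfl

end Basic

section Bipartite

variable {W : Type*} {G : SimpleGraph W} {A : Set W}

def SupportProperty (G : SimpleGraph W) (B : Set W) : Prop :=
  ∀ v ∈ B, IsSupport G v → IsWeakSupport G v ∧ ∀ u : W, G.Adj v u → ¬IsLeaf G u → IsSupport G u

def TwinProperty (G : SimpleGraph W) (A B : Set W) : Prop :=
  ∀ x ∈ A, ∀ y ∈ A, ¬IsLeaf G x → ¬IsSupport G x → ¬IsLeaf G y → ¬IsSupport G y →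
    G.dist x y = 2 → ∃ xb ∈ B, ∃ yb ∈ B, xb ≠ yb ∧
      G.neighborSet xb = {x, y} ∧ G.neighborSet yb = {x, y}

theorem SimpleGraph.IsBipartiteWith.isCoverSet (hG : G.IsBipartiteWith A Aᶜ) : IsCoverSet G A :=
  fun _ _ huv => (hG.mem_of_adj huv).imp And.left And.right

theorem ncard_sdiff_pair_union_singleton_lt [Finite W] {x y w : W} (hx : x ∈ A) (hy : y ∈ A)
    (hxy : x ≠ y) : (A \ {x, y} ∪ {w}).ncard < A.ncard := by
  have hsub : ({x, y} : Set W) ⊆ A := Set.insert_subset hx (Set.singleton_subset_iff.mpr hy)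
  have htwo : 2 ≤ A.ncard := Set.ncard_pair hxy ▸ Set.ncard_le_ncard hsub
  calc (A \ {x, y} ∪ {w}).ncard
      ≤ (A \ {x, y}).ncard + ({w} : Set W).ncard := Set.ncard_union_le _ _
    _ = A.ncard - 2 + 1 := by rw [Set.ncard_sdiff hsub, Set.ncard_pair hxy, Set.ncard_singleton]
    _ < A.ncard := by omega

variable [Finite W]

theorem exists_ne_neighborSet_subset_pair (hG : G.IsBipartiteWith A Aᶜ)
    (hγ : domNum G = A.ncard) {x y w : W} (hx : x ∈ A) (hy : y ∈ A) (hxy : x ≠ y)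
    (hwx : G.Adj w x) (hwy : G.Adj w y) : ∃ b ≠ w, G.neighborSet b ⊆ {x, y} := by
  set S := A \ {x, y} ∪ {w}
  have hwS : w ∈ S := Or.inr rfl
  have hS : ¬IsDomSet G S := fun hS => by
    have := domNum_le hS
    have : S.ncard < A.ncard := ncard_sdiff_pair_union_singleton_lt hx hy hxy
    omega
  simp only [IsDomSet, not_forall, not_exists, not_and] at hS
  obtain ⟨b, hbS, hb⟩ := hS
  have hbA : b ∉ A := fun hbA => by
    have hb' : b = x ∨ b = y := by by_contra h; exact hbS (Or.inl ⟨hbA, by simpa using h⟩)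
    rcases hb' with rfl | rfl
    exacts [hb w hwS hwx, hb w hwS hwy]
  refine ⟨b, fun hbw => hbS (hbw ▸ hwS), fun u hbu => ?_⟩
  have huA : u ∈ A := hG.symm.mem_of_mem_adj hbA hbu
  by_contra hu
  exact hb u (Or.inl ⟨huA, hu⟩) hbu.symm

theorem isSupport_of_adj_of_adj_isLeaf (hG : G.IsBipartiteWith A Aᶜ)
    (hnbr : ∀ v, ∃ u, G.Adj v u) (hγ : domNum G = A.ncard) {v l u : W} (hv : v ∉ A)
    (hl : IsLeaf G l) (hvl : G.Adj v l) (hvu : G.Adj v u) (hul : u ≠ l) : IsSupport G u := by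
  obtain ⟨b, hbv, hb⟩ := exists_ne_neighborSet_subset_pair hG hγ
    (hG.symm.mem_of_mem_adj hv hvl) (hG.symm.mem_of_mem_adj hv hvu) hul.symm hvl hvu
  have hbl : l ∉ G.neighborSet b := fun hbl => hbv (hl.eq_of_adj hbl.symm hvl.symm)
  rcases Set.subset_pair_iff_eq.mp hb with h | h | h | h
  · obtain ⟨c, hbc⟩ := hnbr b
    exact absurd (h ▸ hbc : c ∈ (∅ : Set W)) id
  · exact absurd (h ▸ rfl) hbl
  · exact isSupport_of_neighborSet_eq h
  · exact absurd (h ▸ Set.mem_insert l {u}) hbl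

theorem isWeakSupport_of_isSupport (hG : G.IsBipartiteWith A Aᶜ)
    (hnbr : ∀ v, ∃ u, G.Adj v u) (hγ : domNum G = A.ncard) {v : W} (hv : v ∉ A)
    (hs : IsSupport G v) : IsWeakSupport G v := by
  obtain ⟨l, hvl, hl⟩ := hs
  refine Set.ncard_eq_one.mpr ⟨l, Set.eq_singleton_iff_unique_mem.mpr ⟨⟨hvl, hl⟩, ?_⟩⟩
  rintro u ⟨hvu, hu⟩
  by_contra hul
  obtain ⟨c, huc, hc⟩ := isSupport_of_adj_of_adj_isLeaf hG hnbr hγ hv hl hvl hvu hul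
  obtain rfl : c = v := hu.eq_of_adj huc hvu.symm
  exact hul (hc.eq_of_adj hvu hvl)

theorem supportProperty_of_domNum_eq (hG : G.IsBipartiteWith A Aᶜ)
    (hnbr : ∀ v, ∃ u, G.Adj v u) (hγ : domNum G = A.ncard) : SupportProperty G Aᶜ :=
  fun _ hv hs => ⟨isWeakSupport_of_isSupport hG hnbr hγ hv hs, fun _ hvu hu =>
    let ⟨_, hvl, hl⟩ := hs
    isSupport_of_adj_of_adj_isLeaf hG hnbr hγ hv hl hvl hvu fun hul => hu (hul ▸ hl)⟩

theorem exists_ne_neighborSet_eq_pair (hG : G.IsBipartiteWith A Aᶜ)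
    (hnbr : ∀ v, ∃ u, G.Adj v u) (hγ : domNum G = A.ncard) {x y w : W} (hx : x ∈ A)
    (hy : y ∈ A) (hxy : x ≠ y) (hsx : ¬IsSupport G x) (hsy : ¬IsSupport G y)
    (hwx : G.Adj w x) (hwy : G.Adj w y) : ∃ b ≠ w, G.neighborSet b = {x, y} := by
  obtain ⟨b, hbw, hb⟩ := exists_ne_neighborSet_subset_pair hG hγ hx hy hxy hwx hwy
  refine ⟨b, hbw, ?_⟩
  rcases Set.subset_pair_iff_eq.mp hb with h | h | h | h
  · obtain ⟨c, hbc⟩ := hnbr b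
    exact absurd (h ▸ hbc : c ∈ (∅ : Set W)) id
  · exact absurd (isSupport_of_neighborSet_eq h) hsx
  · exact absurd (isSupport_of_neighborSet_eq h) hsy
  · exact h

theorem twinProperty_of_domNum_eq (hG : G.IsBipartiteWith A Aᶜ)
    (hnbr : ∀ v, ∃ u, G.Adj v u) (hγ : domNum G = A.ncard) : TwinProperty G A Aᶜ := by
  intro x hx y hy _ hsx _ hsy hdist
  obtain ⟨hxy, -, w, hxw, hyw⟩ := dist_eq_two_iff.mp hdist
  obtain ⟨b₁, -, hb₁⟩ :=
    exists_ne_neighborSet_eq_pair hG hnbr hγ hx hy hxy hsx hsy hxw.symm hyw.symm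
  obtain ⟨hb₁x, hb₁y⟩ := adj_of_neighborSet_eq_pair hb₁
  obtain ⟨b₂, hb₂b₁, hb₂⟩ :=
    exists_ne_neighborSet_eq_pair hG hnbr hγ hx hy hxy hsx hsy hb₁x hb₁y
  exact ⟨b₂, hG.mem_of_mem_adj hx (adj_of_neighborSet_eq_pair hb₂).1.symm,
    b₁, hG.mem_of_mem_adj hx hb₁x.symm, hb₂b₁, hb₂, hb₁⟩

end Bipartite

section Represents

variable {W : Type*} [LinearOrder W] {G : SimpleGraph W} {D : Set W}

/-- The two ends `a`, `y` of a pair take opposite extremes of the set of vertices with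
neighbourhood `{a, y}`, so they never pick the same vertex once that set has two elements. -/
structure Represents (G : SimpleGraph W) (D : Set W) (a b : W) : Prop where
  mem : b ∈ D
  adj : G.Adj a b
  neighborSet_eq_of_isSupport : IsSupport G a → G.neighborSet b = {a}
  extreme_of_pair : ¬IsSupport G a → (∃ y ∉ D, y ≠ a ∧ ∃ t, G.neighborSet t = {a, y}) →
    ∃ y ≠ a, (a < y ∧ IsLeast {t | G.neighborSet t = {a, y}} b) ∨
      (y < a ∧ IsGreatest {t | G.neighborSet t = {a, y}} b)

theorem exists_represents [Finite W] (hD : IsDomSet G D) {a : W} (ha : a ∉ D) :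
    ∃ b, Represents G D a b := by
  by_cases hs : IsSupport G a
  · obtain ⟨l, hal, hl⟩ := hs
    have hlD : l ∈ D := hD.mem_of_forall_adj_notMem fun u hlu => hl.eq_of_adj hlu hal.symm ▸ ha
    exact ⟨l, hlD, hal, fun _ => hl.neighborSet_eq hal, fun h => absurd ⟨l, hal, hl⟩ h⟩
  by_cases hp : ∃ y ∉ D, y ≠ a ∧ ∃ t, G.neighborSet t = {a, y}
  · obtain ⟨y, hyD, hya, hT⟩ := hp
    set T := {t | G.neighborSet t = {a, y}}
    obtain ⟨b, hb, hext⟩ : ∃ b ∈ T, (a < y ∧ IsLeast T b) ∨ (y < a ∧ IsGreatest T b) := by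
      rcases hya.lt_or_gt with hlt | hlt
      · obtain ⟨b, hb, hmax⟩ := Set.exists_max_image T id (Set.toFinite T) hT
        exact ⟨b, hb, Or.inr ⟨hlt, hb, hmax⟩⟩
      · obtain ⟨b, hb, hmin⟩ := Set.exists_min_image T id (Set.toFinite T) hT
        exact ⟨b, hb, Or.inl ⟨hlt, hb, hmin⟩⟩
    have hb' : G.neighborSet b = {a, y} := hb
    refine ⟨b, ⟨hD.mem_of_forall_adj_notMem fun u hbu => ?_,
      (adj_of_neighborSet_eq_pair hb').1.symm, fun h => absurd h hs, fun _ _ => ⟨y, hya, hext⟩⟩⟩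
    rcases (hb' ▸ hbu : u ∈ ({a, y} : Set W)) with rfl | rfl
    exacts [ha, hyD]
  · obtain ⟨b, hbD, hba⟩ := hD a ha
    exact ⟨b, hbD, hba.symm, fun h => absurd h hs, fun _ h => absurd h hp⟩

theorem Represents.not_isSupport_of_ne {a a' b : W} (h : Represents G D a b)
    (h' : Represents G D a' b) (hne : a ≠ a') : ¬IsSupport G a := fun hs =>
  hne (h.neighborSet_eq_of_isSupport hs ▸ h'.adj.symm : a' ∈ ({a} : Set W)).symm

theorem Represents.eq_of_twins {a a' b t₁ t₂ : W} (h : Represents G D a b)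
    (h' : Represents G D a' b) (haD : a ∉ D) (ha'D : a' ∉ D) (hsa : ¬IsSupport G a)
    (hsa' : ¬IsSupport G a') (ht : t₁ ≠ t₂) (ht₁ : G.neighborSet t₁ = {a, a'})
    (ht₂ : G.neighborSet t₂ = {a, a'}) : a = a' := by
  by_contra hne
  have partner {c c' y : W} (hc : Represents G D c b) (hc' : G.Adj c' b) (hcc' : c ≠ c')
      (hy : (c < y ∧ IsLeast {t | G.neighborSet t = {c, y}} b) ∨
        (y < c ∧ IsGreatest {t | G.neighborSet t = {c, y}} b)) : c' = y := by
    have hb : G.neighborSet b = {c, y} := by rcases hy with ⟨-, hb, -⟩ | ⟨-, hb, -⟩ <;> exact hb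
    rcases (hb ▸ hc'.symm : c' ∈ ({c, y} : Set W)) with rfl | rfl
    exacts [absurd rfl hcc', rfl]
  obtain ⟨y, -, hy⟩ := h.extreme_of_pair hsa ⟨a', ha'D, Ne.symm hne, t₁, ht₁⟩
  obtain ⟨y', -, hy'⟩ := h'.extreme_of_pair hsa' ⟨a, haD, hne, t₁, by rw [ht₁, Set.pair_comm]⟩
  obtain rfl := partner h h'.adj hne hy
  obtain rfl := partner h' h.adj (Ne.symm hne) hy'
  simp only [Set.pair_comm a' a] at hy'
  have collapse (hl : IsLeast {t | G.neighborSet t = {a, a'}} b)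
      (hg : IsGreatest {t | G.neighborSet t = {a, a'}} b) : False :=
    ht ((le_antisymm (hg.2 ht₁) (hl.2 ht₁)).trans (le_antisymm (hg.2 ht₂) (hl.2 ht₂)).symm)
  rcases hy with ⟨hlt, hl⟩ | ⟨hlt, hg⟩ <;> rcases hy' with ⟨hlt', hl'⟩ | ⟨hlt', hg'⟩
  exacts [absurd hlt (lt_asymm hlt'), collapse hl hg', collapse hl' hg, absurd hlt (lt_asymm hlt')]

theorem Represents.eq {A : Set W} (hG : G.IsBipartiteWith A Aᶜ) (hS : SupportProperty G Aᶜ)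
    (hT : TwinProperty G A Aᶜ) {a a' b : W} (ha : a ∈ A) (ha' : a' ∈ A) (haD : a ∉ D)
    (ha'D : a' ∉ D) (h : Represents G D a b) (h' : Represents G D a' b) : a = a' := by
  by_contra hne
  have hsa := h.not_isSupport_of_ne h' hne
  have hsa' := h'.not_isSupport_of_ne h (Ne.symm hne)
  have hleaf {c c' : W} (hc : Represents G D c b) (hc' : Represents G D c' b) (hcA : c ∈ A)
      (hcc' : c ≠ c') (hsc' : ¬IsSupport G c') : ¬IsLeaf G c := fun hlc => by
    obtain ⟨hweak, hnonleaf⟩ :=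
      hS b (hG.mem_of_mem_adj hcA hc.adj) ⟨c, hc.adj.symm, hlc⟩
    refine hsc' (hnonleaf c' hc'.adj.symm fun hlc' => hcc' ?_)
    obtain ⟨l, hL⟩ := Set.ncard_eq_one.mp hweak
    have hcl : c ∈ ({l} : Set W) := hL ▸ ⟨hc.adj.symm, hlc⟩
    have hc'l : c' ∈ ({l} : Set W) := hL ▸ ⟨hc'.adj.symm, hlc'⟩
    exact hcl.trans hc'l.symm
  have hdist : G.dist a a' = 2 := dist_eq_two_iff.mpr
    ⟨hne, fun hadj => hG.mem_of_mem_adj ha hadj ha', b, h.adj, h'.adj⟩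
  obtain ⟨t₁, -, t₂, -, ht, ht₁, ht₂⟩ := hT a ha a' ha'
    (hleaf h h' ha hne hsa') hsa (hleaf h' h ha' (Ne.symm hne) hsa) hsa' hdist
  exact hne (h.eq_of_twins h' haD ha'D hsa hsa' ht ht₁ ht₂)

end Represents

theorem ncard_le_of_isDomSet {W : Type*} [Finite W] {G : SimpleGraph W} {A D : Set W}
    (hG : G.IsBipartiteWith A Aᶜ) (hS : SupportProperty G Aᶜ) (hT : TwinProperty G A Aᶜ)
    (hD : IsDomSet G D) : A.ncard ≤ D.ncard := by
  let : LinearOrder W := IsWellOrder.linearOrder WellOrderingRel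
  choose! f hf using fun a (ha : a ∉ D) => exists_represents hD ha
  have hmaps : ∀ a ∈ A \ D, f a ∈ D \ A := fun a ⟨ha, haD⟩ =>
    ⟨(hf a haD).mem, hG.mem_of_mem_adj ha (hf a haD).adj⟩
  have hinj : Set.InjOn f (A \ D) := fun a ⟨ha, haD⟩ a' ⟨ha', ha'D⟩ heq =>
    (hf a haD).eq hG hS hT ha ha' haD ha'D (heq ▸ hf a' ha'D)
  calc A.ncard = (A ∩ D).ncard + (A \ D).ncard :=
        (Set.ncard_inter_add_ncard_sdiff_eq_ncard A D).symm
    _ ≤ (D ∩ A).ncard + (D \ A).ncard := by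
      rw [Set.inter_comm]
      exact Nat.add_le_add_left (Set.ncard_le_ncard_of_injOn f hmaps hinj) _
    _ = D.ncard := Set.ncard_inter_add_ncard_sdiff_eq_ncard D A

theorem domNum_eq_card_tfae {W : Type*} [Fintype W] (G : SimpleGraph W) (A B : Set W)
    (hconn : G.Connected)
    (hdisj : Disjoint A B) (hcover : A ∪ B = Set.univ)
    (hbip : ∀ u v : W, G.Adj u v → (u ∈ A ∧ v ∈ B) ∨ (u ∈ B ∧ v ∈ A))
    (hA : 1 ≤ A.ncard) (hAB : A.ncard ≤ B.ncard) :
    List.TFAE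
      [ domNum G = A.ncard,
        domNum G = A.ncard ∧ coverNum G = A.ncard,
        (∀ v ∈ B, IsSupport G v →
            IsWeakSupport G v ∧ ∀ u : W, G.Adj v u → ¬ IsLeaf G u → IsSupport G u) ∧
        (∀ x ∈ A, ∀ y ∈ A, ¬ IsLeaf G x → ¬ IsSupport G x → ¬ IsLeaf G y → ¬ IsSupport G y →
          G.dist x y = 2 →
          ∃ xb ∈ B, ∃ yb ∈ B, xb ≠ yb ∧
            G.neighborSet xb = {x, y} ∧ G.neighborSet yb = {x, y}) ] := by
  obtain rfl : B = Aᶜ := (IsCompl.compl_eq ⟨hdisj, codisjoint_iff.mpr hcover⟩).symm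
  have hG : G.IsBipartiteWith A Aᶜ := ⟨hdisj, hbip⟩
  obtain ⟨a, ha⟩ := Set.nonempty_of_ncard_ne_zero (s := A) (by omega)
  obtain ⟨b, hb⟩ := Set.nonempty_of_ncard_ne_zero (s := Aᶜ) (by omega)
  have : Nontrivial W := nontrivial_of_ne a b fun hab => hb (hab ▸ ha)
  have hnbr := hconn.preconnected.exists_adj_of_nontrivial
  have hγA : domNum G ≤ A.ncard := domNum_le (hG.isCoverSet.isDomSet hnbr)
  have hβA : coverNum G ≤ A.ncard := coverNum_le hG.isCoverSet
  have hγβ : domNum G ≤ coverNum G := domNum_le_coverNum hnbr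
  tfae_have 1 → 2 := fun hγ => ⟨hγ, by omega⟩
  tfae_have 2 → 1 := And.left
  tfae_have 1 → 3 := fun hγ =>
    ⟨supportProperty_of_domNum_eq hG hnbr hγ, twinProperty_of_domNum_eq hG hnbr hγ⟩
  tfae_have 3 → 1 := fun ⟨hS, hT⟩ =>
    le_antisymm hγA (le_domNum fun _ => ncard_le_of_isDomSet hG hS hT)
  tfae_finish
end

section
/- Let H be a connected finite simple graph and f : 𝒦_H → ℕ a non-zero function such that: (1) whenever uv is an edge of H with f(H[u,v]) = 0, there exists a complete subgraph H′ of H containing the edge uv with f(H′) > 0; and (2) whenever uv is an edge of H with f(H[u]) = f(H[v]) = 0, one has f(H[u,v]) ≥ 2. Then the bipartization B_f(H) = ((A,B),E) has a matching saturating A; in particular |A| ≤ |B|. -/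
/-!
Every vertex `v` of `H` is sent to a clique `φ v ∋ v`: to `H[v]` if `f(H[v]) > 0`; to an edge
`H[v,u]` with `f(H[u]) = 0` if there is one, which has at least two copies by (2); otherwise to a
clique through `v` and some neighbour with positive weight, supplied by (1), in which `v` is the
only vertex of zero singleton weight. Each clique `K` then receives at most `f(K)` vertices, so
the vertices sent to `K` can be matched with distinct copies `(K,i)`.
-/

open Function Finset

theorem exists_injective_sigma_fin_of_card_fiber_le {α β : Type*} [Finite α] (m : β → ℕ)
    (φ : α → β) (h : ∀ b, Nat.card {a // φ a = b} ≤ m b) :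
    ∃ g : α → Σ b, Fin (m b), Injective g ∧ ∀ a, (g a).1 = φ a := by
  have hemb (b : β) : Nonempty ({a // φ a = b} ↪ Fin (m b)) := by
    have := Fintype.ofFinite {a // φ a = b}
    exact Embedding.nonempty_of_card_le
      (by simpa only [← Nat.card_eq_fintype_card, Nat.card_fin] using h b)
  let e b := (hemb b).some
  refine ⟨Sigma.map id (fun b => e b) ∘ (Equiv.sigmaFiberEquiv φ).symm, ?_,
    Equiv.sigmaFiberEquiv_symm_apply_fst φ⟩
  exact (injective_id.sigma_map fun b => (e b).injective).comp (Equiv.injective _)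

theorem SimpleGraph.Subgraph.exists_isMatching_of_injective {ι X : Type*} {G : SimpleGraph X}
    {a b : ι → X} (ha : Injective a) (hb : Injective b)
    (hab : Disjoint (Set.range a) (Set.range b))
    (hadj : ∀ i, G.Adj (a i) (b i)) :
    ∃ M : G.Subgraph, M.verts = Set.range a ∪ Set.range b ∧ M.IsMatching :=
  IsMatching.exists_of_disjoint_sets_of_equiv hab
    ((Equiv.ofInjective a ha).symm.trans (Equiv.ofInjective b hb))
    (by rintro ⟨_, i, rfl⟩; simpa [Equiv.ofInjective_symm_apply] using hadj i)

section Bipartization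

variable {V : Type*} {H : SimpleGraph V} {f : Finset V → ℕ}

theorem Bip.adj_inl_inr_s14 {x : V} {p : Σ K : CliqueSet H, Fin (f K.1)} (hx : x ∈ p.1.1) :
    (Bip H f).Adj (Sum.inl x) (Sum.inr p) :=
  Or.inl ⟨x, p, rfl, rfl, hx⟩

theorem Bip.exists_isMatching_of_injective (g : V → Σ K : CliqueSet H, Fin (f K.1))
    (hg : Injective g) (hmem : ∀ v, v ∈ (g v).1.1) :
    ∃ M : (Bip H f).Subgraph, M.IsMatching ∧ ∀ v, Sum.inl v ∈ M.verts := by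
  obtain ⟨M, hMverts, hM⟩ := SimpleGraph.Subgraph.exists_isMatching_of_injective
    Sum.inl_injective (Sum.inr_injective.comp hg)
    (Set.isCompl_range_inl_range_inr.disjoint.mono_right (Set.range_comp_subset_range _ _))
    (fun v => Bip.adj_inl_inr_s14 (hmem v))
  exact ⟨M, hM, fun v => hMverts ▸ Or.inl ⟨v, rfl⟩⟩

theorem isCliqueF_singleton (v : V) : IsCliqueF H {v} :=
  ⟨singleton_nonempty v, by simp +contextual [mem_singleton]⟩

theorem isCliqueF_pair [DecidableEq V] {u v : V} (h : H.Adj u v) : IsCliqueF H {u, v} :=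
  ⟨insert_nonempty u {v}, by aesop (add simp SimpleGraph.adj_comm)⟩

theorem IsCliqueF.filter_subset_singleton {K : Finset V} (hK : IsCliqueF H K) {v : V} (hv : v ∈ K)
    {p : V → Prop} [DecidablePred p] (hnbr : ∀ u, H.Adj v u → ¬ p u) : {u ∈ K | p u} ⊆ {v} := by
  intro u hu
  rw [mem_filter] at hu
  by_contra hne
  exact hnbr u (hK.2 v hv u hu.1 (Ne.symm (mem_singleton.not.mp hne))) hu.2

theorem exists_adj_of_singleton_eq_zero (hconn : H.Connected)
    (hnz : ∃ K : Finset V, IsCliqueF H K ∧ 1 ≤ f K) {v : V} (hv : f {v} = 0) : ∃ u, H.Adj v u := by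
  cases subsingleton_or_nontrivial V with
  | inl _ =>
    obtain ⟨K, ⟨hKne, -⟩, hK⟩ := hnz
    rw [eq_singleton_iff_nonempty_unique_mem.mpr ⟨hKne, fun _ _ => Subsingleton.elim _ v⟩, hv] at hK
    omega
  | inr _ => exact hconn.preconnected.exists_adj_of_nontrivial v

theorem exists_clique_mem_card_zero_le [DecidableEq V] (hconn : H.Connected)
    (hnz : ∃ K : Finset V, IsCliqueF H K ∧ 1 ≤ f K)
    (h1 : ∀ u v : V, H.Adj u v → f {u, v} = 0 →
      ∃ K : Finset V, IsCliqueF H K ∧ u ∈ K ∧ v ∈ K ∧ 0 < f K)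
    (h2 : ∀ u v : V, H.Adj u v → f {u} = 0 → f {v} = 0 → 2 ≤ f {u, v}) {v : V} (hv : f {v} = 0) :
    ∃ K : CliqueSet H, v ∈ K.1 ∧ #{w ∈ K.1 | f {w} = 0} ≤ f K.1 := by
  by_cases hzero_nbr : ∃ u, H.Adj v u ∧ f {u} = 0
  · obtain ⟨u, hvu, hu⟩ := hzero_nbr
    refine ⟨⟨{v, u}, isCliqueF_pair hvu⟩, mem_insert_self v {u}, ?_⟩
    calc #{w ∈ {v, u} | f {w} = 0} ≤ #{v, u} := card_filter_le _ _
      _ ≤ 2 := card_le_two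
      _ ≤ f {v, u} := h2 v u hvu hv hu
  · push Not at hzero_nbr
    obtain ⟨u, hvu⟩ := exists_adj_of_singleton_eq_zero hconn hnz hv
    obtain ⟨K, hK, hvK, -, hfK⟩ : ∃ K : Finset V, IsCliqueF H K ∧ v ∈ K ∧ u ∈ K ∧ 0 < f K :=
      if hvu0 : f {v, u} = 0 then h1 v u hvu hvu0
      else ⟨{v, u}, isCliqueF_pair hvu, by simp, by simp, Nat.pos_of_ne_zero hvu0⟩
    refine ⟨⟨K, hK⟩, hvK, ?_⟩
    calc #{w ∈ K | f {w} = 0} ≤ #{v} := card_le_card (hK.filter_subset_singleton hvK hzero_nbr)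
      _ ≤ f K := hfK

theorem card_fiber_le [Fintype V] [DecidableEq V] {φ : V → CliqueSet H}
    (hmem : ∀ v, v ∈ (φ v).1) (hpos : ∀ v, f {v} ≠ 0 → (φ v).1 = {v})
    (hzero : ∀ v, f {v} = 0 → #{w ∈ (φ v).1 | f {w} = 0} ≤ f (φ v).1) (K : CliqueSet H) :
    Nat.card {v // φ v = K} ≤ f K.1 := by
  rw [Nat.card_eq_fintype_card, Fintype.card_subtype]
  obtain hK | ⟨v₀, hv₀⟩ := ({v | φ v = K} : Finset V).eq_empty_or_nonempty
  · simp [hK]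
  obtain rfl := (mem_filter.mp hv₀).2
  by_cases h0 : f {v₀} = 0
  · refine (card_le_card fun v hv => ?_).trans (hzero v₀ h0)
    have hφv : φ v = φ v₀ := (mem_filter.mp hv).2
    refine mem_filter.mpr ⟨hφv ▸ hmem v, ?_⟩
    by_contra hv0
    have : v₀ ∈ ({v} : Finset V) := hpos v hv0 ▸ hφv ▸ hmem v₀
    exact hv0 (mem_singleton.mp this ▸ h0)
  · calc #{v | φ v = φ v₀} ≤ #{v₀} := card_le_card fun v hv =>
          hpos v₀ h0 ▸ (mem_filter.mp hv).2 ▸ hmem v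
      _ ≤ f (φ v₀).1 := by rw [hpos v₀ h0, card_singleton]; omega

theorem exists_injective_clique_assignment [Fintype V] [DecidableEq V] (hconn : H.Connected)
    (hnz : ∃ K : Finset V, IsCliqueF H K ∧ 1 ≤ f K)
    (h1 : ∀ u v : V, H.Adj u v → f {u, v} = 0 →
      ∃ K : Finset V, IsCliqueF H K ∧ u ∈ K ∧ v ∈ K ∧ 0 < f K)
    (h2 : ∀ u v : V, H.Adj u v → f {u} = 0 → f {v} = 0 → 2 ≤ f {u, v}) :
    ∃ g : V → Σ K : CliqueSet H, Fin (f K.1), Injective g ∧ ∀ v, v ∈ (g v).1.1 := by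
  have hclique (v : V) : ∃ K : CliqueSet H, v ∈ K.1 ∧ (f {v} ≠ 0 → K.1 = {v}) ∧
      (f {v} = 0 → #{w ∈ K.1 | f {w} = 0} ≤ f K.1) := by
    by_cases hv : f {v} = 0
    · obtain ⟨K, hvK, hK⟩ := exists_clique_mem_card_zero_le hconn hnz h1 h2 hv
      exact ⟨K, hvK, (absurd hv ·), fun _ => hK⟩
    · exact ⟨⟨{v}, isCliqueF_singleton v⟩, mem_singleton_self v, fun _ => rfl, (absurd · hv)⟩
  choose φ hmem hpos hzero using hclique
  obtain ⟨g, hg, hgφ⟩ :=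
    exists_injective_sigma_fin_of_card_fiber_le _ φ (card_fiber_le hmem hpos hzero)
  exact ⟨g, hg, fun v => hgφ v ▸ hmem v⟩

end Bipartization

theorem bip_saturating_matching {V : Type*} [Fintype V] [DecidableEq V]
    (H : SimpleGraph V) (f : Finset V → ℕ) (hconn : H.Connected)
    (hnz : ∃ K : Finset V, IsCliqueF H K ∧ 1 ≤ f K)
    (h1 : ∀ u v : V, H.Adj u v → f {u, v} = 0 →
      ∃ K : Finset V, IsCliqueF H K ∧ u ∈ K ∧ v ∈ K ∧ 0 < f K)
    (h2 : ∀ u v : V, H.Adj u v → f {u} = 0 → f {v} = 0 → 2 ≤ f {u, v}) :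
    (∃ M : (Bip H f).Subgraph, M.IsMatching ∧ ∀ x : V, Sum.inl x ∈ M.verts) ∧
      Nat.card V ≤ Nat.card (Σ K : CliqueSet H, Fin (f K.1)) := by
  obtain ⟨g, hg, hmem⟩ := exists_injective_clique_assignment hconn hnz h1 h2
  exact ⟨Bip.exists_isMatching_of_injective g hg hmem, Nat.card_le_card_of_injective g hg⟩
end
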